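/- Deterministic core of Lemma D.2 (dis-radius) of 'Active Learning with Logged Data': For all γ0, γ1 > 0 there exists a constant γ2 > 1, depending only on γ0 and γ1, with the following property. Let H be a set, h*, ĥ, h ∈ H, let L, L̂ : H → ℝ, let ρ, ρ̂ : H × H → [0,∞), let σ ≥ 0, and set ν = L(h*), assumed ≥ 0. Assume: (i) L(g) − L(h*) ≤ 2·(L̂(g) − L̂(h*)) + γ1·σ + γ1·sqrt(σ·ν) for g ∈ {h, ĥ}; (ii) L̂(ĥ) ≤ L̂(h*); (iii) L̂(h) ≤ L̂(ĥ) + γ0·σ + γ0·sqrt(σ·ρ̂(h,ĥ)); (iv) ρ̂(h,ĥ) ≤ ρ̂(h,h*) + ρ̂(ĥ,h*); (v) ρ̂(g,h*) ≤ 2·ρ(g,h*) + (16/3)·σ for g ∈ {h, ĥ}; (vi) ρ(g,h*) ≤ (L(g) − L(h*)) + 2·ν for g ∈ {h, ĥ}. Then L(h) − L(h*) ≤ γ2·σ + γ2·sqrt(σ·ν). -/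

import Mathlib

/-!
Write `a = L h − L h*` and `ε = σ + √(σν)`. By (i) for `ĥ` and (ii), `L ĥ − L h* ≤ γ1 ε`, so
(iv)–(vi) bound `ρ̂(h, ĥ)` by `2a` plus a multiple of `σ + √(σν) + ν`; as
`σ (σ + √(σν) + ν) ≤ ε²`, this gives `√(σ ρ̂(h, ĥ)) ≤ √(2σa) + O(ε)`. Chaining (i) for `h`, (ii)
and (iii) then bounds `a` by `O(ε) + 2γ0 √(2σa)`, and AM-GM on the square root absorbs half of
`a` into the left side, leaving `a = O(ε)`.
-/

open Real

lemma le_two_mul_add_sq_mul_of_le_add_mul_sqrt {σ x A c : ℝ} (hσ : 0 ≤ σ) (hx : 0 ≤ x)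
    (h : x ≤ A + c * √(σ * x)) : x ≤ 2 * A + c ^ 2 * σ := by
  have amgm : 2 * (c * √(σ * x)) ≤ c ^ 2 * σ + x := by
    rw [sqrt_mul hσ]
    nlinarith [sq_nonneg (c * √σ - √x), sq_sqrt hσ, sq_sqrt hx]
  linarith

lemma mul_add_sqrt_mul_add_le_sq {σ ν : ℝ} (hσ : 0 ≤ σ) (hν : 0 ≤ ν) :
    σ * (σ + √(σ * ν) + ν) ≤ (σ + √(σ * ν)) ^ 2 := by
  nlinarith [sq_sqrt (mul_nonneg hσ hν), sqrt_nonneg (σ * ν)]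

lemma sqrt_mul_le_sqrt_mul_add {σ ν x r K : ℝ} (hσ : 0 ≤ σ) (hν : 0 ≤ ν) (hx : 0 ≤ x)
    (hK : 1 ≤ K) (hr : r ≤ x + K * (σ + √(σ * ν) + ν)) :
    √(σ * r) ≤ √(σ * x) + K * (σ + √(σ * ν)) := by
  set ε := σ + √(σ * ν)
  have hε : 0 ≤ ε := by positivity
  have hσr : σ * r ≤ σ * x + K * ε ^ 2 := by
    nlinarith [mul_le_mul_of_nonneg_left hr hσ, mul_add_sqrt_mul_add_le_sq hσ hν]
  have hKε : K * ε ^ 2 ≤ (K * ε) ^ 2 := by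
    nlinarith [mul_nonneg (sq_nonneg ε) (sub_nonneg.2 hK)]
  have cross : 0 ≤ 2 * √(σ * x) * (K * ε) := by positivity
  rw [sqrt_le_left (by positivity)]
  nlinarith [sq_sqrt (mul_nonneg hσ hx)]

theorem dis_radius_core.{u} :
    ∀ γ0 γ1 : ℝ, 0 < γ0 → 0 < γ1 →
    ∃ γ2 : ℝ, 1 < γ2 ∧
      ∀ (H : Type u) (hstar hhat h : H) (L Lhat : H → ℝ)
        (ρ ρhat : H → H → ℝ) (σ : ℝ),
        (∀ g g' : H, 0 ≤ ρ g g') → (∀ g g' : H, 0 ≤ ρhat g g') →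
        0 ≤ σ → 0 ≤ L hstar →
        -- (i) excess-error concentration for g ∈ {h, ĥ}
        (∀ g ∈ ({h, hhat} : Set H),
          L g - L hstar ≤ 2 * (Lhat g - Lhat hstar)
            + γ1 * σ + γ1 * Real.sqrt (σ * L hstar)) →
        -- (ii) ĥ is the empirical risk minimizer
        Lhat hhat ≤ Lhat hstar →
        -- (iii) h lies in the next candidate set
        Lhat h ≤ Lhat hhat + γ0 * σ + γ0 * Real.sqrt (σ * ρhat h hhat) →
        -- (iv) triangle inequality for the empirical disagreement
        ρhat h hhat ≤ ρhat h hstar + ρhat hhat hstar →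
        -- (v) empirical vs true disagreement for g ∈ {h, ĥ}
        (∀ g ∈ ({h, hhat} : Set H),
          ρhat g hstar ≤ 2 * ρ g hstar + (16 / 3) * σ) →
        -- (vi) disagreement vs error rates for g ∈ {h, ĥ}
        (∀ g ∈ ({h, hhat} : Set H),
          ρ g hstar ≤ (L g - L hstar) + 2 * L hstar) →
        L h - L hstar ≤ γ2 * σ + γ2 * Real.sqrt (σ * L hstar) := by
  intro γ0 γ1 hγ0 hγ1
  set K := 2 * γ1 + 11
  refine ⟨2 * (2 * γ0 + γ1 + 2 * γ0 * K) + 8 * γ0 ^ 2 + 1,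
    lt_add_of_pos_left 1 (by positivity), ?_⟩
  intro H hstar hhat h L Lhat ρ ρhat σ _ _ hσ hν hi hii hiii hiv hv hvi
  have mem_h : h ∈ ({h, hhat} : Set H) := Or.inl rfl
  have mem_hhat : hhat ∈ ({h, hhat} : Set H) := Or.inr rfl
  rw [← mul_add]
  set a := L h - L hstar
  set ε := σ + √(σ * L hstar)
  have hs : 0 ≤ √(σ * L hstar) := sqrt_nonneg _
  have hε : 0 ≤ ε := by positivity
  rcases le_or_gt a 0 with ha | ha
  · exact ha.trans (mul_nonneg (by positivity) hε)
  have excess_hhat : L hhat - L hstar ≤ γ1 * ε := by linarith [hi hhat mem_hhat]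
  have dis_le : ρhat h hhat ≤ 2 * a + K * (σ + √(σ * L hstar) + L hstar) := by
    nlinarith [hv h mem_h, hv hhat mem_hhat, hvi h mem_h, hvi hhat mem_hhat, mul_nonneg hγ1.le hν]
  have sqrt_dis_le : √(σ * ρhat h hhat) ≤ √((2 * σ) * a) + K * ε := by
    rw [mul_assoc, mul_left_comm]
    exact sqrt_mul_le_sqrt_mul_add hσ hν (by positivity) (by linarith) dis_le
  have self_bound : a ≤ (2 * γ0 + γ1 + 2 * γ0 * K) * ε + 2 * γ0 * √((2 * σ) * a) := by
    nlinarith [hi h mem_h, mul_le_mul_of_nonneg_left sqrt_dis_le hγ0.le, mul_nonneg hγ0.le hs]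
  nlinarith [le_two_mul_add_sq_mul_of_le_add_mul_sqrt (by positivity) ha.le self_bound,
    mul_nonneg (sq_nonneg γ0) hs]
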